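/- arXiv:1104.4698 — 2 statements merged into one kernel-verified Lean document; each statement's English description precedes it below -/
import Mathlib

section
/- Let N be a von Neumann algebra, q ∈ N an idempotent such that q N q = Z q where Z is the center of N (i.e., for every x ∈ N there is a central element a_x with q x q = a_x q). Then the left support projection f of q is an abelian projection: f N f = Z f. -/
/-- Let `N` be a (von Neumann) algebra with center `Z`, and `q` an
idempotent such that `q N q ⊆ Z q`. If `f` is the left support projection of `q`
(so `q * f = f` and `f * q * f = f`), then `f` is an abelian projection:
`f N f ⊆ Z f`. -/
theorem left_support_of_centrally_corner_idempotent_is_abelian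
    {N : Type*} [Ring N] (q f : N) (hq : q * q = q)
    (hcorner : ∀ x : N, ∃ a : N, (∀ y : N, a * y = y * a) ∧ q * x * q = a * q)
    (hqf : q * f = f) (hfqf : f * q * f = f) :
    ∀ x : N, ∃ a : N, (∀ y : N, a * y = y * a) ∧ f * x * f = a * f := by
  intro x
  obtain ⟨a, ha, heq⟩ := hcorner (f * x * f)
  refine ⟨a, ha, ?_⟩
  calc f * x * f = (f * q * f) * x * (f * q * f) := by rw [hfqf]
    _ = f * (q * (f * x * f) * q) * f := by noncomm_ring
    _ = f * (a * q) * f := by rw [heq]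
    _ = f * a * (q * f) := by noncomm_ring
    _ = a * f * (q * f) := by rw [ha f]
    _ = a * (f * q * f) := by noncomm_ring
    _ = a * f := by rw [hfqf]
end

section
/- Let φ be a ring automorphism of an abelian von Neumann algebra's measurable operator algebra L⁰(Ω,Σ,μ) (complex-valued measurable functions mod null) that is continuous in the topology of local convergence in measure. Then φ maps L^∞(Ω,Σ,μ) into L^∞(Ω,Σ,μ), and ‖φ(x)‖_∞ = ‖x‖_∞ for all x ∈ L^∞. -/
open MeasureTheory Filter

open scoped ENNReal NNReal

/-! If `‖y‖_∞ < 1` then `yⁿ → 0` in measure, and conversely `yⁿ → 0` in measure forces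
`‖y‖_∞ ≤ 1`. A multiplicative map that is continuous in measure therefore sends the open unit
ball of `L^∞` into the closed one, and `ℚ`-homogeneity (a consequence of additivity) turns this
into `‖φ x‖_∞ ≤ ‖x‖_∞`. Conversely, if `‖φ x‖_∞ < c < ‖x‖_∞`, put `A = {|x| > c}` and
`y = 1_A / x`, so that `‖y‖_∞ ≤ 1 / c` and `x y = 1_A` is a nonzero idempotent. Its image
`φ x · φ y` is an idempotent of norm `< 1`, hence zero, which contradicts injectivity. -/

namespace MeasureTheory.AEEqFun

variable {Ω 𝕜 : Type*} [MeasurableSpace Ω] {μ : Measure Ω}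

def SeqContinuousInMeasure {E : Type*} [PseudoEMetricSpace E] (μ : Measure Ω)
    (Φ : (Ω →ₘ[μ] E) → (Ω →ₘ[μ] E)) : Prop :=
  ∀ (f : ℕ → Ω →ₘ[μ] E) (g : Ω →ₘ[μ] E),
    TendstoInMeasure μ (fun n => ⇑(f n)) atTop ⇑g →
    TendstoInMeasure μ (fun n => ⇑(Φ (f n))) atTop ⇑(Φ g)

section NormedDivisionRing

variable [NormedDivisionRing 𝕜]

theorem eLpNorm_mul_le_eLpNorm_top_mul_eLpNorm (p : ℝ≥0∞) (f g : Ω →ₘ[μ] 𝕜) :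
    eLpNorm (⇑(f * g)) p μ ≤ eLpNorm f ⊤ μ * eLpNorm g p μ := by
  rw [eLpNorm_congr_ae (coeFn_mul f g)]
  exact eLpNorm_smul_le_eLpNorm_top_mul_eLpNorm p g.aestronglyMeasurable f

theorem eLpNorm_smul (p : ℝ≥0∞) (c : 𝕜) (f : Ω →ₘ[μ] 𝕜) :
    eLpNorm (⇑(c • f)) p μ = ‖c‖ₑ * eLpNorm f p μ := by
  rw [eLpNorm_congr_ae (coeFn_smul c f), eLpNorm_const_smul]

theorem eLpNorm_le_one_of_tendstoInMeasure_pow (z : Ω →ₘ[μ] 𝕜)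
    (h : TendstoInMeasure μ (fun n => ⇑(z ^ n)) atTop ⇑(0 : Ω →ₘ[μ] 𝕜)) :
    eLpNorm z ⊤ μ ≤ 1 := by
  rw [eLpNorm_exponent_top]
  refine eLpNormEssSup_le_of_ae_enorm_bound (ae_iff.2 (le_antisymm ?_ zero_le))
  have hmono : ∀ n : ℕ,
      μ {ω | ¬‖z ω‖ₑ ≤ 1} ≤ μ {ω | 1 ≤ edist ((z ^ n) ω) ((0 : Ω →ₘ[μ] 𝕜) ω)} := by
    intro n
    refine measure_mono_ae ?_
    filter_upwards [coeFn_pow z n, coeFn_zero (β := 𝕜)] with ω hpow h0 (hω : ¬‖z ω‖ₑ ≤ 1)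
    show 1 ≤ edist ((z ^ n) ω) ((0 : Ω →ₘ[μ] 𝕜) ω)
    rw [hpow, h0, Pi.pow_apply, Pi.zero_apply, edist_zero_right, enorm_pow]
    exact one_le_pow₀ (not_le.1 hω).le
  exact ge_of_tendsto' (h 1 one_pos) hmono

theorem eq_zero_of_isIdempotentElem_of_eLpNorm_lt_one {e : Ω →ₘ[μ] 𝕜} (he : IsIdempotentElem e)
    (h : eLpNorm e ⊤ μ < 1) : e = 0 := by
  rw [eLpNorm_exponent_top] at h
  refine ext ?_
  filter_upwards [coeFn_mul e e, coeFn_zero (β := 𝕜), enorm_ae_le_eLpNormEssSup e μ]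
    with ω hmul h0 hω
  have hidem : IsIdempotentElem (e ω) := by
    rw [IsIdempotentElem, ← Pi.mul_apply, ← hmul, he.eq]
  rw [h0]
  refine (IsIdempotentElem.iff_eq_zero_or_one.1 hidem).resolve_right fun h1 => ?_
  simpa [h1] using hω.trans_lt h

theorem tendstoInMeasure_pow_zero_of_eLpNorm_lt_one [IsFiniteMeasure μ] {y : Ω →ₘ[μ] 𝕜}
    (hy : eLpNorm y ⊤ μ < 1) :
    TendstoInMeasure μ (fun n => ⇑(y ^ n)) atTop ⇑(0 : Ω →ₘ[μ] 𝕜) := by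
  rw [eLpNorm_exponent_top] at hy
  refine tendstoInMeasure_of_tendsto_ae (fun n => (y ^ n).aestronglyMeasurable) ?_
  have hpow : ∀ᵐ ω ∂μ, ∀ n : ℕ, (y ^ n) ω = y ω ^ n := ae_all_iff.2 (coeFn_pow y)
  filter_upwards [hpow, coeFn_zero (β := 𝕜), enorm_ae_le_eLpNormEssSup y μ] with ω hpow h0 hyω
  have hlt : ‖y ω‖ₑ < 1 := hyω.trans_lt hy
  rw [← ofReal_norm, ENNReal.ofReal_lt_one] at hlt
  rw [h0, funext hpow]
  exact tendsto_pow_atTop_nhds_zero_of_norm_lt_one hlt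

end NormedDivisionRing

section RCLike

variable [RCLike 𝕜]

theorem exists_isIdempotentElem_mul_ne_zero (x : Ω →ₘ[μ] 𝕜) {c : ℝ≥0}
    (hc : (c : ℝ≥0∞) < eLpNorm x ⊤ μ) :
    ∃ y : Ω →ₘ[μ] 𝕜, eLpNorm y ⊤ μ ≤ (c : ℝ≥0∞)⁻¹ ∧ IsIdempotentElem (x * y) ∧ x * y ≠ 0 := by
  rw [eLpNorm_exponent_top] at hc
  set A : Set Ω := {ω | (c : ℝ≥0∞) < ‖x ω‖ₑ}
  have hA : MeasurableSet A :=
    measurableSet_lt measurable_const x.stronglyMeasurable.measurable.enorm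
  have hx0 : ∀ ω ∈ A, x ω ≠ 0 := fun ω hω h0 => by simp [A, h0] at hω
  have hy : AEStronglyMeasurable (A.indicator fun ω => (x ω)⁻¹) μ :=
    (x.stronglyMeasurable.measurable.inv.indicator hA).aestronglyMeasurable
  have he : AEStronglyMeasurable (A.indicator 1 : Ω → 𝕜) μ :=
    (measurable_const.indicator hA).aestronglyMeasurable
  have hxy : x * mk _ hy = mk _ he := by
    refine ext ?_
    filter_upwards [coeFn_mul x (mk _ hy), coeFn_mk _ hy, coeFn_mk _ he] with ω hmul hy he
    rw [hmul, Pi.mul_apply, hy, he]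
    by_cases hω : ω ∈ A
    · simp [hω, hx0 ω hω]
    · simp [hω]
  refine ⟨mk _ hy, ?_, hxy ▸ ?_, hxy ▸ ?_⟩
  · rw [eLpNorm_exponent_top, eLpNormEssSup_congr_ae (coeFn_mk _ hy)]
    refine eLpNormEssSup_le_of_ae_enorm_bound (ae_of_all _ fun ω => ?_)
    by_cases hω : ω ∈ A
    · rw [Set.indicator_of_mem hω, enorm_inv (hx0 ω hω)]
      exact ENNReal.inv_le_inv.2 (le_of_lt hω)
    · simp [hω]
  · refine ext ?_
    filter_upwards [coeFn_mul (mk _ he) (mk _ he), coeFn_mk _ he] with ω hmul he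
    rw [hmul, Pi.mul_apply, he]
    by_cases hω : ω ∈ A <;> simp [hω]
  · intro he0
    have hnull : μ A = 0 := by
      refine measure_eq_zero_iff_ae_notMem.2 ?_
      filter_upwards [coeFn_mk _ he, he0 ▸ coeFn_zero (β := 𝕜)] with ω h1 h2 hω
      rw [Set.indicator_of_mem hω] at h1
      exact one_ne_zero (h1.symm.trans h2)
    refine hc.not_ge (eLpNormEssSup_le_of_ae_enorm_bound ?_)
    filter_upwards [measure_eq_zero_iff_ae_notMem.1 hnull] with ω hω
    exact not_lt.1 hω

-- `Ω →ₘ[μ] 𝕜` has no ring instance, so a ring endomorphism is a monoid hom plus additivity.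
variable [IsFiniteMeasure μ] {Φ : (Ω →ₘ[μ] 𝕜) →* (Ω →ₘ[μ] 𝕜)}
  (hadd : ∀ x y, Φ (x + y) = Φ x + Φ y) (hΦ : SeqContinuousInMeasure μ Φ)
include hadd hΦ

theorem eLpNorm_map_le_one_of_eLpNorm_lt_one {y : Ω →ₘ[μ] 𝕜} (hy : eLpNorm y ⊤ μ < 1) :
    eLpNorm (Φ y) ⊤ μ ≤ 1 := by
  have hzero : Φ 0 = 0 := map_zero (AddMonoidHom.mk' Φ hadd)
  refine eLpNorm_le_one_of_tendstoInMeasure_pow (Φ y) ?_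
  simpa only [map_pow, hzero] using hΦ _ _ (tendstoInMeasure_pow_zero_of_eLpNorm_lt_one hy)

theorem eLpNorm_map_le_enorm_ratCast {x : Ω →ₘ[μ] 𝕜} {q : ℚ}
    (hx : eLpNorm x ⊤ μ < ‖(q : 𝕜)‖ₑ) : eLpNorm (Φ x) ⊤ μ ≤ ‖(q : 𝕜)‖ₑ := by
  have hq : (q : 𝕜) ≠ 0 := fun h => by simp [h] at hx
  obtain ⟨y, rfl⟩ : ∃ y, x = (q : 𝕜) • y := ⟨(q : 𝕜)⁻¹ • x, (smul_inv_smul₀ hq x).symm⟩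
  rw [eLpNorm_smul ⊤] at hx
  have hy : eLpNorm y ⊤ μ < 1 := lt_one_of_mul_lt_right hx
  have hsmul : Φ ((q : 𝕜) • y) = (q : 𝕜) • Φ y :=
    map_ratCast_smul (AddMonoidHom.mk' Φ hadd) 𝕜 𝕜 q y
  calc eLpNorm (Φ ((q : 𝕜) • y)) ⊤ μ = ‖(q : 𝕜)‖ₑ * eLpNorm (Φ y) ⊤ μ := by
        rw [hsmul, eLpNorm_smul]
    _ ≤ ‖(q : 𝕜)‖ₑ * 1 := by gcongr; exact eLpNorm_map_le_one_of_eLpNorm_lt_one hadd hΦ hy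
    _ = ‖(q : 𝕜)‖ₑ := mul_one _

theorem eLpNorm_map_le (x : Ω →ₘ[μ] 𝕜) : eLpNorm (Φ x) ⊤ μ ≤ eLpNorm x ⊤ μ := by
  refine le_of_forall_gt_imp_ge_of_dense fun c hc => ?_
  obtain ⟨q, hq0, hxq, hqc⟩ := ENNReal.lt_iff_exists_rat_btwn.1 hc
  have hq : ‖(q : 𝕜)‖ₑ = (Real.toNNReal q : ℝ≥0∞) := by
    rw [← ofReal_norm, ← RCLike.ofReal_ratCast, RCLike.norm_ofReal,
      abs_of_nonneg (Rat.cast_nonneg.2 hq0)]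
    rfl
  rw [← hq] at hxq hqc
  exact (eLpNorm_map_le_enorm_ratCast hadd hΦ hxq).trans hqc.le

theorem eLpNorm_le_map (hinj : Function.Injective Φ) (x : Ω →ₘ[μ] 𝕜) :
    eLpNorm x ⊤ μ ≤ eLpNorm (Φ x) ⊤ μ := by
  by_contra! hlt
  obtain ⟨c, hΦx, hx⟩ := ENNReal.lt_iff_exists_nnreal_btwn.1 hlt
  obtain ⟨y, hy, hidem, hne⟩ := exists_isIdempotentElem_mul_ne_zero x hx
  have hc0 : (c : ℝ≥0∞) ≠ 0 := (pos_of_gt hΦx).ne'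
  have hnorm : eLpNorm (Φ (x * y)) ⊤ μ < 1 := calc
    _ ≤ eLpNorm (Φ x) ⊤ μ * eLpNorm (Φ y) ⊤ μ :=
      map_mul Φ x y ▸ eLpNorm_mul_le_eLpNorm_top_mul_eLpNorm ⊤ _ _
    _ ≤ eLpNorm (Φ x) ⊤ μ * (c : ℝ≥0∞)⁻¹ := by
      gcongr; exact (eLpNorm_map_le hadd hΦ y).trans hy
    _ < c * (c : ℝ≥0∞)⁻¹ := ENNReal.mul_lt_mul_left (ENNReal.inv_ne_zero.2 ENNReal.coe_ne_top)
      (ENNReal.inv_ne_top.2 hc0) hΦx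
    _ = 1 := ENNReal.mul_inv_cancel hc0 ENNReal.coe_ne_top
  have hzero : Φ 0 = 0 := map_zero (AddMonoidHom.mk' Φ hadd)
  exact hne (hinj ((eq_zero_of_isIdempotentElem_of_eLpNorm_lt_one (hidem.map Φ) hnorm).trans
    hzero.symm))

end RCLike

end MeasureTheory.AEEqFun

theorem measure_continuous_automorphism_preserves_Linfty_general
    {Ω : Type*} [MeasurableSpace Ω] (μ : Measure Ω) [IsFiniteMeasure μ]
    (φ : (Ω →ₘ[μ] ℂ) ≃ (Ω →ₘ[μ] ℂ))
    (hadd : ∀ x y : Ω →ₘ[μ] ℂ, φ (x + y) = φ x + φ y)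
    (hmul : ∀ x y : Ω →ₘ[μ] ℂ, φ (x * y) = φ x * φ y)
    (hcont : ∀ (f : ℕ → Ω →ₘ[μ] ℂ) (g : Ω →ₘ[μ] ℂ),
      TendstoInMeasure μ (fun n => ⇑(f n)) atTop ⇑g →
      TendstoInMeasure μ (fun n => ⇑(φ (f n))) atTop ⇑(φ g)) :
    ∀ x : Ω →ₘ[μ] ℂ, eLpNorm (⇑x) ⊤ μ ≠ ⊤ →
      eLpNorm (⇑(φ x)) ⊤ μ ≠ ⊤ ∧ eLpNorm (⇑(φ x)) ⊤ μ = eLpNorm (⇑x) ⊤ μ := by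
  intro x hx
  let Φ : (Ω →ₘ[μ] ℂ) ≃* (Ω →ₘ[μ] ℂ) := { φ with map_mul' := hmul }
  have hnorm : eLpNorm (⇑(φ x)) ⊤ μ = eLpNorm (⇑x) ⊤ μ :=
    le_antisymm (AEEqFun.eLpNorm_map_le (Φ := Φ.toMonoidHom) hadd hcont x)
      (AEEqFun.eLpNorm_le_map (Φ := Φ.toMonoidHom) hadd hcont Φ.injective x)
  exact ⟨hnorm ▸ hx, hnorm⟩

/-- Let `φ` be a ring automorphism of `L⁰(Ω, Σ, μ)` (complex measurable
functions modulo null sets) which is (sequentially) continuous for the topology of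
convergence in measure.  Then `φ` maps `L^∞` into `L^∞` and preserves the essential
supremum norm: `‖φ x‖_∞ = ‖x‖_∞` for every `x ∈ L^∞`. -/
theorem measure_continuous_automorphism_preserves_Linfty
    {Ω : Type*} [MeasurableSpace Ω] (μ : Measure Ω) [IsFiniteMeasure μ]
    (φ : (Ω →ₘ[μ] ℂ) ≃ (Ω →ₘ[μ] ℂ))
    (hadd : ∀ x y : Ω →ₘ[μ] ℂ, φ (x + y) = φ x + φ y)
    (hmul : ∀ x y : Ω →ₘ[μ] ℂ, φ (x * y) = φ x * φ y)
    (hone : φ 1 = 1)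
    (hcont : ∀ (f : ℕ → Ω →ₘ[μ] ℂ) (g : Ω →ₘ[μ] ℂ),
      TendstoInMeasure μ (fun n => ⇑(f n)) atTop ⇑g →
      TendstoInMeasure μ (fun n => ⇑(φ (f n))) atTop ⇑(φ g)) :
    ∀ x : Ω →ₘ[μ] ℂ, eLpNorm (⇑x) ⊤ μ ≠ ⊤ →
      eLpNorm (⇑(φ x)) ⊤ μ ≠ ⊤ ∧ eLpNorm (⇑(φ x)) ⊤ μ = eLpNorm (⇑x) ⊤ μ :=
  measure_continuous_automorphism_preserves_Linfty_general μ φ hadd hmul hcont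
end
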